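/- arXiv:2412.06518 — 5 statements merged into one kernel-verified Lean document; each statement's English description precedes it below -/
import Mathlib

section
/- Let (x,z) be a feasible solution to Forest-BCR, let r₀, r₁, …, r_{k−1} be an enumeration of the terminals R, and let w ∈ V. For 0 ≤ i ≤ k−1 define λ_i = max{ z^w_P : P ∈ 𝒫, P ∩ {r₀, …, r_i} ≠ ∅ }, μ₀ = λ₀, and μ_i = λ_i − λ_{i−1} for i ≥ 1. Then there exists a vector f of reals on directed edges with 0 ≤ f_e ≤ x^w_e for every directed edge e, with ∑_{e∈δ⁺({r_i})} f_e − ∑_{e∈δ⁻({r_i})} f_e = μ_i for every i with r_i ≠ w, and with ∑_{e∈δ⁺({v})} f_e − ∑_{e∈δ⁻({v})} f_e = 0 for every v ∈ V∖(R ∪ {w}). -/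
open Finset

noncomputable section

variable {V : Type*}

/-- The set of terminals: vertices occurring in some pair of `P`. -/
def terminals [Fintype V] [DecidableEq V] (P : Finset (Finset V)) : Finset V :=
  Finset.univ.filter fun v => ∃ p ∈ P, v ∈ p

/-- Feasibility for the Forest-BCR linear program: `x r u v` is the value of the
variable `x^r_{(u,v)}` and `z r p` is the value of `z^r_P`. -/
def ForestBCRFeasible [Fintype V] [DecidableEq V] (P : Finset (Finset V))
    (x : V → V → V → ℝ) (z : V → Finset V → ℝ) : Prop :=
  (∀ r u v : V, u ≠ v → 0 ≤ x r u v) ∧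
  (∀ r : V, ∀ p ∈ P, 0 ≤ z r p) ∧
  (∀ p ∈ P, ∑ r : V, z r p = 1) ∧
  (∀ r : V, ∀ p ∈ P, ∀ U : Finset V, r ∉ U → (p ∩ U).Nonempty →
    z r p ≤ ∑ u ∈ U, ∑ v ∈ Uᶜ, x r u v)

/-- The cost `c(x)` of a Forest-BCR solution. -/
def bcrCost [Fintype V] [DecidableEq V] (c : V → V → ℝ) (x : V → V → V → ℝ) : ℝ :=
  ∑ r : V, ∑ u : V, ∑ v ∈ Finset.univ.erase u, c u v * x r u v

/-- Half-integrality of a Forest-BCR solution. -/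
def HalfIntegralSol [Fintype V] [DecidableEq V] (P : Finset (Finset V))
    (x : V → V → V → ℝ) (z : V → Finset V → ℝ) : Prop :=
  (∀ r u v : V, u ≠ v → ∃ n : ℤ, x r u v = n / 2) ∧
  (∀ r : V, ∀ p ∈ P, ∃ n : ℤ, z r p = n / 2)

/-- The solution `x` is supported on the graph `G`. -/
def SupportedOn (G : SimpleGraph V) (x : V → V → V → ℝ) : Prop :=
  ∀ r u v : V, u ≠ v → ¬ G.Adj u v → x r u v = 0

/-- Net outflow of `f` at `v`. -/
def netOut [Fintype V] (f : V → V → ℝ) (v : V) : ℝ := ∑ u, f v u - ∑ u, f u v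

lemma continuous_netOut [Fintype V] (v : V) :
    Continuous fun f : V → V → ℝ => netOut f v := by
  unfold netOut
  exact (continuous_finset_sum _ fun u _ =>
      (continuous_apply u).comp (continuous_apply v)).sub
    (continuous_finset_sum _ fun u _ =>
      (continuous_apply v).comp (continuous_apply u))

lemma sum_indicator_pair [Fintype V] [DecidableEq V] (a0 b0 v : V) (t : ℝ) :
    ∑ u, (if v = a0 ∧ u = b0 then t else 0) = if v = a0 then t else 0 := by
  by_cases hv : v = a0 <;> simp [hv]

lemma sum_indicator_pair' [Fintype V] [DecidableEq V] (a0 b0 v : V) (t : ℝ) :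
    ∑ u, (if u = a0 ∧ v = b0 then t else 0) = if v = b0 then t else 0 := by
  by_cases hv : v = b0 <;> simp [hv]

lemma netOut_addEdge [Fintype V] [DecidableEq V] (g : V → V → ℝ) (a0 b0 : V) (t : ℝ) (v : V) :
    netOut (fun a b => g a b + (if a = a0 ∧ b = b0 then t else 0)) v
      = netOut g v + t * ((if v = a0 then 1 else 0) - (if v = b0 then 1 else 0)) := by
  unfold netOut
  rw [Finset.sum_add_distrib, Finset.sum_add_distrib, sum_indicator_pair,
    sum_indicator_pair']
  by_cases h1 : v = a0 <;> by_cases h2 : v = b0 <;> simp [h1, h2] <;> split_ifs <;> ring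

lemma augment_exists [Fintype V] [DecidableEq V] (cap f : V → V → ℝ)
    (hf0 : ∀ u v, 0 ≤ f u v) (hfc : ∀ u v, f u v ≤ cap u v) (v₀ u : V)
    (hreach : Relation.ReflTransGen (fun a b => f a b < cap a b ∨ 0 < f b a) v₀ u) :
    ∃ ε₀ > 0, ∃ M : ℝ, 0 ≤ M ∧ ∀ ε ∈ Set.Icc (0:ℝ) ε₀, ∃ g : V → V → ℝ,
      (∀ a b, 0 ≤ g a b) ∧ (∀ a b, g a b ≤ cap a b) ∧
      (∀ a b, |g a b - f a b| ≤ M * ε) ∧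
      (∀ v, netOut g v = netOut f v +
        ε * ((if v = v₀ then 1 else 0) - (if v = u then 1 else 0))) := by
  induction hreach with
  | refl =>
      refine ⟨1, one_pos, 0, le_refl 0, fun ε hε => ⟨f, hf0, hfc, ?_, fun v => by ring⟩⟩
      intro a b; simp
  | @tail b c hab hbc ih =>
      obtain ⟨ε₀, hε₀, M, hM, hih⟩ := ih
      rcases hbc with hfw | hbw
      · -- forward residual edge: f b c < cap b c
        have hs : 0 < cap b c - f b c := by linarith
        refine ⟨min ε₀ ((cap b c - f b c) / (M + 1)), lt_min hε₀ (by positivity),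
          M + 1, by linarith, fun ε hε => ?_⟩
        obtain ⟨hε0, hεle⟩ := hε
        obtain ⟨g, hg0, hgc, hgf, hgex⟩ := hih ε ⟨hε0, le_trans hεle (min_le_left _ _)⟩
        have hεs : (M + 1) * ε ≤ cap b c - f b c := by
          have h1 : ε ≤ (cap b c - f b c) / (M + 1) := le_trans hεle (min_le_right _ _)
          rw [le_div_iff₀ (by linarith : (0:ℝ) < M + 1)] at h1
          linarith [h1]
        refine ⟨fun a b' => g a b' + (if a = b ∧ b' = c then ε else 0), ?_, ?_, ?_, ?_⟩
        · intro a b'; dsimp only; have := hg0 a b'; split_ifs <;> linarith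
        · intro a b'; dsimp only
          by_cases h : a = b ∧ b' = c
          · obtain ⟨h1, h2⟩ := h; subst h1; subst h2
            rw [if_pos ⟨rfl, rfl⟩]
            have := (abs_le.mp (hgf a b')).2
            linarith
          · rw [if_neg h]; simpa using hgc a b'
        · intro a b'; dsimp only
          have h1 := hgf a b'
          have : |g a b' + (if a = b ∧ b' = c then ε else 0) - f a b'|
              ≤ |g a b' - f a b'| + |(if a = b ∧ b' = c then ε else 0)| := by
            have := abs_add_le (g a b' - f a b') (if a = b ∧ b' = c then ε else 0)
            rw [add_sub_right_comm]; exact this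
          have h2 : |(if a = b ∧ b' = c then ε else 0)| ≤ ε := by
            split_ifs <;> simp [abs_of_nonneg hε0, hε0]
          calc |g a b' + (if a = b ∧ b' = c then ε else 0) - f a b'|
              ≤ |g a b' - f a b'| + |(if a = b ∧ b' = c then ε else 0)| := this
            _ ≤ M * ε + ε := add_le_add h1 h2
            _ = (M + 1) * ε := by ring
        · intro v
          rw [netOut_addEdge g b c ε v, hgex v]
          ring
      · -- backward residual edge: 0 < f c b
        have hs : 0 < f c b := hbw
        refine ⟨min ε₀ (f c b / (M + 1)), lt_min hε₀ (by positivity),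
          M + 1, by linarith, fun ε hε => ?_⟩
        obtain ⟨hε0, hεle⟩ := hε
        obtain ⟨g, hg0, hgc, hgf, hgex⟩ := hih ε ⟨hε0, le_trans hεle (min_le_left _ _)⟩
        have hεs : (M + 1) * ε ≤ f c b := by
          have h1 : ε ≤ f c b / (M + 1) := le_trans hεle (min_le_right _ _)
          rw [le_div_iff₀ (by linarith : (0:ℝ) < M + 1)] at h1
          linarith [h1]
        refine ⟨fun a b' => g a b' + (if a = c ∧ b' = b then -ε else 0), ?_, ?_, ?_, ?_⟩
        · intro a b'; dsimp only
          by_cases h : a = c ∧ b' = b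
          · obtain ⟨h1, h2⟩ := h; subst h1; subst h2
            rw [if_pos ⟨rfl, rfl⟩]
            have := (abs_le.mp (hgf a b')).1
            linarith
          · rw [if_neg h]; simpa using hg0 a b'
        · intro a b'; dsimp only; have := hgc a b'; split_ifs <;> linarith
        · intro a b'; dsimp only
          have h1 := hgf a b'
          have habs : |g a b' + (if a = c ∧ b' = b then -ε else 0) - f a b'|
              ≤ |g a b' - f a b'| + |(if a = c ∧ b' = b then -ε else 0)| := by
            have := abs_add_le (g a b' - f a b') (if a = c ∧ b' = b then -ε else 0)
            rw [add_sub_right_comm]; exact this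
          have h2 : |(if a = c ∧ b' = b then -ε else 0)| ≤ ε := by
            split_ifs <;> simp [abs_of_nonneg hε0, hε0]
          calc |g a b' + (if a = c ∧ b' = b then -ε else 0) - f a b'|
              ≤ |g a b' - f a b'| + |(if a = c ∧ b' = b then -ε else 0)| := habs
            _ ≤ M * ε + ε := add_le_add h1 h2
            _ = (M + 1) * ε := by ring
        · intro v
          rw [netOut_addEdge g c b (-ε) v, hgex v]
          ring

lemma flow_exists [Fintype V] [DecidableEq V] (cap : V → V → ℝ) (d : V → ℝ) (w : V)
    (hcap : ∀ u v, 0 ≤ cap u v) (hd : ∀ v, 0 ≤ d v)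
    (hcut : ∀ U : Finset V, w ∉ U → ∑ v ∈ U, d v ≤ ∑ u ∈ U, ∑ v ∈ Uᶜ, cap u v) :
    ∃ f : V → V → ℝ, (∀ u v, 0 ≤ f u v ∧ f u v ≤ cap u v) ∧
      ∀ v, v ≠ w → netOut f v = d v := by
  classical
  set F : Set (V → V → ℝ) :=
    {h | (∀ u v, 0 ≤ h u v ∧ h u v ≤ cap u v) ∧ ∀ v, v ≠ w → netOut h v ≤ d v} with hF
  -- F is closed
  have hFclosed : IsClosed F := by
    have hFeq : F = (⋂ (u : V) (v : V), {h : V → V → ℝ | 0 ≤ h u v ∧ h u v ≤ cap u v}) ∩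
        ⋂ (v : V), {h : V → V → ℝ | v ≠ w → netOut h v ≤ d v} := by
      ext h; simp only [hF, Set.mem_setOf_eq, Set.mem_inter_iff, Set.mem_iInter]
    rw [hFeq]
    refine IsClosed.inter (isClosed_iInter fun u => isClosed_iInter fun v => ?_)
      (isClosed_iInter fun v => ?_)
    · have hc : Continuous fun h : V → V → ℝ => h u v :=
        (continuous_apply v).comp (continuous_apply u)
      exact (isClosed_le continuous_const hc).inter (isClosed_le hc continuous_const)
    · by_cases hv : v = w
      · have : {h : V → V → ℝ | v ≠ w → netOut h v ≤ d v} = Set.univ := by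
          ext h; simp [hv]
        rw [this]; exact isClosed_univ
      · have : {h : V → V → ℝ | v ≠ w → netOut h v ≤ d v} = {h | netOut h v ≤ d v} := by
          ext h; simp [hv]
        rw [this]; exact isClosed_le (continuous_netOut v) continuous_const
  -- F is compact
  have hK : IsCompact (Set.pi Set.univ fun u : V =>
      Set.pi Set.univ fun v : V => Set.Icc (0:ℝ) (cap u v)) :=
    isCompact_univ_pi fun u => isCompact_univ_pi fun v => isCompact_Icc
  have hFcpt : IsCompact F := by
    refine hK.of_isClosed_subset hFclosed fun h hh => ?_
    exact Set.mem_univ_pi.2 fun u => Set.mem_univ_pi.2 fun v => ⟨(hh.1 u v).1, (hh.1 u v).2⟩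
  have hFne : F.Nonempty := by
    refine ⟨0, fun u v => ?_, fun v hv => ?_⟩
    · simpa using hcap u v
    · simpa [netOut] using hd v
  -- maximize objective
  obtain ⟨f, hfF, hfmax⟩ := hFcpt.exists_isMaxOn hFne
    ((continuous_finset_sum _ fun v _ => continuous_netOut v).continuousOn :
      ContinuousOn (fun h : V → V → ℝ => ∑ v ∈ Finset.univ.erase w, netOut h v) F)
  have hf0 : ∀ u v, 0 ≤ f u v := fun u v => (hfF.1 u v).1
  have hfc : ∀ u v, f u v ≤ cap u v := fun u v => (hfF.1 u v).2
  refine ⟨f, fun u v => ⟨hf0 u v, hfc u v⟩, fun v hv => ?_⟩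
  refine le_antisymm (hfF.2 v hv) (not_lt.1 fun hlt => ?_)
  set v₀ := v
  set rel : V → V → Prop := fun a b => f a b < cap a b ∨ 0 < f b a with hrel
  by_cases hw : Relation.ReflTransGen rel v₀ w
  · -- augmenting path exists: contradiction with maximality
    obtain ⟨ε₀, hε₀, M, hM, hε⟩ := augment_exists cap f hf0 hfc v₀ w hw
    set ε := min ε₀ (d v₀ - netOut f v₀) with hεdef
    have hεpos : 0 < ε := lt_min hε₀ (by linarith)
    obtain ⟨g, hg0, hgc, hgf, hgex⟩ := hε ε ⟨le_of_lt hεpos, min_le_left _ _⟩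
    have hgF : g ∈ F := by
      refine ⟨fun u' v' => ⟨hg0 u' v', hgc u' v'⟩, fun v' hv' => ?_⟩
      rw [hgex v']
      by_cases h1 : v' = v₀
      · subst h1
        rw [if_pos rfl, if_neg hv']
        have : ε ≤ d v' - netOut f v' := min_le_right _ _
        linarith
      · rw [if_neg h1, if_neg hv']
        have := hfF.2 v' hv'
        linarith
    have hsum : ∑ u ∈ Finset.univ.erase w, netOut g u
        = (∑ u ∈ Finset.univ.erase w, netOut f u) + ε := by
      rw [Finset.sum_congr rfl fun u _ => hgex u, Finset.sum_add_distrib]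
      congr 1
      rw [← Finset.mul_sum, Finset.sum_sub_distrib, Finset.sum_ite_eq', Finset.sum_ite_eq']
      simp [hv, hεdef]
    have := isMaxOn_iff.mp hfmax g hgF
    rw [hsum] at this
    linarith
  · -- saturated cut: contradiction with cut condition
    set A : Finset V := Finset.univ.filter (Relation.ReflTransGen rel v₀) with hA
    have hv₀A : v₀ ∈ A := Finset.mem_filter.2 ⟨Finset.mem_univ _, Relation.ReflTransGen.refl⟩
    have hwA : w ∉ A := fun h => hw (Finset.mem_filter.1 h).2
    have hsat : ∀ a ∈ A, ∀ b ∈ Aᶜ, f a b = cap a b ∧ f b a = 0 := by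
      intro a ha b hb
      have hnrel : ¬ rel a b := fun hr => (Finset.mem_compl.1 hb)
        (Finset.mem_filter.2 ⟨Finset.mem_univ _, (Finset.mem_filter.1 ha).2.tail hr⟩)
      rw [hrel] at hnrel
      exact ⟨le_antisymm (hfc a b) (not_lt.1 fun h => hnrel (Or.inl h)),
        le_antisymm (not_lt.1 fun h => hnrel (Or.inr h)) (hf0 b a)⟩
    have hkey : ∑ a ∈ A, netOut f a = ∑ a ∈ A, ∑ b ∈ Aᶜ, cap a b := by
      have e1 : ∑ a ∈ A, netOut f a
          = ∑ a ∈ A, ((∑ b ∈ A, f a b + ∑ b ∈ Aᶜ, f a b)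
            - (∑ b ∈ A, f b a + ∑ b ∈ Aᶜ, f b a)) := by
        refine Finset.sum_congr rfl fun a _ => ?_
        rw [netOut, Finset.sum_add_sum_compl, Finset.sum_add_sum_compl]
      rw [e1, Finset.sum_sub_distrib, Finset.sum_add_distrib, Finset.sum_add_distrib]
      have e2 : ∑ a ∈ A, ∑ b ∈ A, f a b = ∑ a ∈ A, ∑ b ∈ A, f b a := Finset.sum_comm
      have e3 : ∑ a ∈ A, ∑ b ∈ Aᶜ, f a b = ∑ a ∈ A, ∑ b ∈ Aᶜ, cap a b :=
        Finset.sum_congr rfl fun a ha => Finset.sum_congr rfl fun b hb => (hsat a ha b hb).1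
      have e4 : ∑ a ∈ A, ∑ b ∈ Aᶜ, f b a = 0 :=
        Finset.sum_eq_zero fun a ha => Finset.sum_eq_zero fun b hb => (hsat a ha b hb).2
      rw [e3, e4] at *
      linarith [e2]
    have h1 : ∑ a ∈ A, d a ≤ ∑ a ∈ A, ∑ b ∈ Aᶜ, cap a b := hcut A hwA
    have h2 : ∑ a ∈ A, netOut f a < ∑ a ∈ A, d a := by
      refine Finset.sum_lt_sum (fun a ha => hfF.2 a fun h => hwA (h ▸ ha)) ⟨v₀, hv₀A, hlt⟩
    linarith

/-- Given a feasible Forest-BCR solution, an enumeration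
`r 0, …, r (k−1)` of the terminals, a vertex `w`, and the quantities
`λ_i = max { z^w_P : P ∩ {r 0, …, r i} ≠ ∅ }`, `μ_0 = λ_0`, `μ_i = λ_i − λ_{i−1}`,
there is a flow `f ≤ x^w` with net outflow `μ_i` at each terminal `r i ≠ w` and net
outflow `0` at each vertex outside `R ∪ {w}`. -/
theorem flow_to_w_exists [Fintype V] [DecidableEq V]
    (P : Finset (Finset V)) (hP : ∀ p ∈ P, p.card = 2)
    (x : V → V → V → ℝ) (z : V → Finset V → ℝ)
    (hfeas : ForestBCRFeasible P x z)
    (k : ℕ) (r : ℕ → V)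
    (hr_mem : ∀ i < k, r i ∈ terminals P)
    (hr_inj : ∀ i < k, ∀ j < k, r i = r j → i = j)
    (hr_surj : ∀ v ∈ terminals P, ∃ i < k, r i = v)
    (w : V)
    (lam : ℕ → ℝ)
    (hlam : ∀ i < k,
      IsGreatest {t : ℝ | ∃ p ∈ P, (∃ j ≤ i, r j ∈ p) ∧ t = z w p} (lam i))
    (mu : ℕ → ℝ)
    (hmu : ∀ i < k, mu i = if i = 0 then lam 0 else lam i - lam (i - 1)) :
    ∃ f : V → V → ℝ,
      (∀ u v : V, u ≠ v → 0 ≤ f u v ∧ f u v ≤ x w u v) ∧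
      (∀ i < k, r i ≠ w →
        (∑ u ∈ Finset.univ.erase (r i), f (r i) u) -
          (∑ u ∈ Finset.univ.erase (r i), f u (r i)) = mu i) ∧
      (∀ v : V, v ∉ terminals P → v ≠ w →
        (∑ u ∈ Finset.univ.erase v, f v u) -
          (∑ u ∈ Finset.univ.erase v, f u v) = 0) := by
  
  classical
  obtain ⟨hx0, hz0, hz1, hzcut⟩ := hfeas
  set cap : V → V → ℝ := fun u v => if u = v then 0 else x w u v with hcapdef
  have hcap : ∀ u v, 0 ≤ cap u v := by
    intro u v; rw [hcapdef]; dsimp only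
    split_ifs with h
    · exact le_refl 0
    · exact hx0 w u v h
  set d : V → ℝ := fun v => ∑ i ∈ Finset.range k, if r i = v then mu i else 0 with hddef
  -- nonnegativity of lam and mu
  have hlam_nonneg : ∀ i < k, 0 ≤ lam i := by
    intro i hi
    obtain ⟨p, hp, -, heq⟩ := (hlam i hi).1
    rw [heq]; exact hz0 w p hp
  have hlam_mono : ∀ i, i + 1 < k → lam i ≤ lam (i + 1) := by
    intro i hi
    refine (hlam (i+1) hi).2 ?_
    obtain ⟨p, hp, ⟨j, hj, hrj⟩, heq⟩ := (hlam i (Nat.lt_of_succ_lt hi)).1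
    exact ⟨p, hp, ⟨j, le_trans hj (Nat.le_succ i), hrj⟩, heq⟩
  have hmu_nonneg : ∀ i < k, 0 ≤ mu i := by
    intro i hi
    rw [hmu i hi]
    split_ifs with h
    · exact hlam_nonneg 0 (h ▸ hi)
    · have hi1 : i - 1 + 1 = i := Nat.succ_pred_eq_of_pos (Nat.pos_of_ne_zero h)
      have := hlam_mono (i - 1) (hi1 ▸ hi)
      rw [hi1] at this
      linarith
  have hd : ∀ v, 0 ≤ d v := by
    intro v
    refine Finset.sum_nonneg fun i hi => ?_
    split_ifs
    · exact hmu_nonneg i (Finset.mem_range.1 hi)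
    · exact le_refl 0
  -- telescoping
  have tel : ∀ m, m < k → ∑ i ∈ Finset.range (m + 1), mu i = lam m := by
    intro m
    induction m with
    | zero => intro h; simpa using hmu 0 h
    | succ n ih =>
        intro h
        rw [Finset.sum_range_succ, ih (Nat.lt_of_succ_lt h), hmu (n+1) h]
        simp
  -- the cut condition
  have hcut : ∀ U : Finset V, w ∉ U → ∑ v ∈ U, d v ≤ ∑ u ∈ U, ∑ v ∈ Uᶜ, cap u v := by
    intro U hwU
    have hdU : ∑ v ∈ U, d v = ∑ i ∈ Finset.range k, (if r i ∈ U then mu i else 0) := by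
      rw [hddef]
      dsimp only
      rw [Finset.sum_comm]
      refine Finset.sum_congr rfl fun i _ => ?_
      rw [Finset.sum_ite_eq]
    rw [hdU]
    have hcapcongr : ∑ u ∈ U, ∑ v ∈ Uᶜ, cap u v = ∑ u ∈ U, ∑ v ∈ Uᶜ, x w u v := by
      refine Finset.sum_congr rfl fun u hu => Finset.sum_congr rfl fun v hv => ?_
      have huv : u ≠ v := fun h => (Finset.mem_compl.1 hv) (h ▸ hu)
      rw [hcapdef]; exact if_neg huv
    set T : Finset ℕ := (Finset.range k).filter (fun i => r i ∈ U ∧ 0 < mu i) with hT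
    by_cases hTne : T.Nonempty
    · set m := T.max' hTne with hm
      have hmT : m ∈ T := T.max'_mem hTne
      obtain ⟨hmr, hmU, hmpos⟩ : m ∈ Finset.range k ∧ r m ∈ U ∧ 0 < mu m := by
        have := Finset.mem_filter.1 hmT; exact ⟨this.1, this.2.1, this.2.2⟩
      have hmk : m < k := Finset.mem_range.1 hmr
      have step1 : ∑ i ∈ Finset.range k, (if r i ∈ U then mu i else 0)
          ≤ ∑ i ∈ Finset.range (m + 1), mu i := by
        have h1 : ∑ i ∈ Finset.range k, (if r i ∈ U then mu i else 0)
            ≤ ∑ i ∈ Finset.range k, (if i ≤ m then mu i else 0) := by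
          refine Finset.sum_le_sum fun i hi => ?_
          by_cases hiU : r i ∈ U
          · rw [if_pos hiU]
            by_cases him : i ≤ m
            · rw [if_pos him]
            · rw [if_neg him]
              by_cases hipos : 0 < mu i
              · exact absurd (T.le_max' i (Finset.mem_filter.2 ⟨hi, hiU, hipos⟩)) him
              · linarith [not_lt.1 hipos]
          · rw [if_neg hiU]
            split_ifs
            · exact hmu_nonneg i (Finset.mem_range.1 hi)
            · exact le_refl 0
        have h2 : ∑ i ∈ Finset.range k, (if i ≤ m then mu i else 0)
            = ∑ i ∈ Finset.range (m + 1), mu i := by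
          rw [← Finset.sum_subset (Finset.range_subset_range.2 hmk)
            (fun i _ hni => if_neg (fun hle => hni (Finset.mem_range.2 (Nat.lt_succ_of_le hle))))]
          exact Finset.sum_congr rfl fun i hi => if_pos (Nat.lt_succ_iff.1 (Finset.mem_range.1 hi))
        linarith
      rw [tel m hmk] at step1
      obtain ⟨p, hp, ⟨j, hj, hrj⟩, heq⟩ := (hlam m hmk).1
      have hrmp : r m ∈ p := by
        by_cases hjm : j = m
        · exact hjm ▸ hrj
        · exfalso
          have hjm' : j ≤ m - 1 := by omega
          have hmne : m ≠ 0 := by omega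
          have hle : z w p ≤ lam (m - 1) :=
            (hlam (m - 1) (by omega)).2 ⟨p, hp, ⟨j, hjm', hrj⟩, rfl⟩
          have hmm : mu m = lam m - lam (m - 1) := by rw [hmu m hmk, if_neg hmne]
          linarith [heq, hle, hmm, hmpos]
      have hcutp : z w p ≤ ∑ u ∈ U, ∑ v ∈ Uᶜ, x w u v :=
        hzcut w p hp U hwU ⟨r m, Finset.mem_inter.2 ⟨hrmp, hmU⟩⟩
      rw [heq] at step1
      rw [hcapcongr]
      linarith
    · have hLHS : ∑ i ∈ Finset.range k, (if r i ∈ U then mu i else 0) = 0 := by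
        refine Finset.sum_eq_zero fun i hi => ?_
        by_cases hiU : r i ∈ U
        · rw [if_pos hiU]
          by_cases hipos : 0 < mu i
          · exact absurd ⟨i, Finset.mem_filter.2 ⟨hi, hiU, hipos⟩⟩ hTne
          · linarith [not_lt.1 hipos, hmu_nonneg i (Finset.mem_range.1 hi)]
        · exact if_neg hiU
      rw [hLHS]
      exact Finset.sum_nonneg fun u _ => Finset.sum_nonneg fun v _ => hcap u v
  -- apply the flow existence lemma
  obtain ⟨f, hfb, hfe⟩ := flow_exists cap d w hcap hd hcut
  have herase : ∀ (g : V → V → ℝ) (v : V),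
      (∑ u ∈ Finset.univ.erase v, g v u) - (∑ u ∈ Finset.univ.erase v, g u v)
        = netOut g v := by
    intro g v
    rw [netOut, ← Finset.sum_erase_add Finset.univ (fun u => g v u) (Finset.mem_univ v),
      ← Finset.sum_erase_add Finset.univ (fun u => g u v) (Finset.mem_univ v)]
    ring
  refine ⟨f, ?_, ?_, ?_⟩
  · intro u v huv
    refine ⟨(hfb u v).1, ?_⟩
    have := (hfb u v).2
    rw [hcapdef] at this
    simpa [if_neg huv] using this
  · intro i hi hiw
    rw [herase f (r i), hfe (r i) hiw, hddef]
    dsimp only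
    rw [Finset.sum_eq_single_of_mem i (Finset.mem_range.2 hi)
      (fun j hj hne => if_neg fun heq => hne (hr_inj j (Finset.mem_range.1 hj) i hi heq))]
    exact if_pos rfl
  · intro v hvt hvw
    rw [herase f v, hfe v hvw, hddef]
    dsimp only
    refine Finset.sum_eq_zero fun i hi => ?_
    refine if_neg fun heq => hvt ?_
    exact heq ▸ hr_mem i (Finset.mem_range.1 hi)
end
end

section
/- Let (x,z) be a feasible solution to Forest-BCR, let r₀, r₁, …, r_{k−1} be an enumeration of the terminals R, and let A be a set of ordered pairs of terminals such that {r_i, r_j} ∈ 𝒫 for every (r_i, r_j) ∈ A, such that i < j for every (r_i, r_j) ∈ A, such that every r_j with j ≥ 1 has exactly one entering arc in A, and r₀ has none. Let w ∈ V, define λ_i = max{ z^w_P : P ∈ 𝒫, P ∩ {r₀, …, r_i} ≠ ∅ }, μ₀ = λ₀ and μ_i = λ_i − λ_{i−1}, and let f be a vector on directed edges with 0 ≤ f_e ≤ x^w_e, with net outflow ∑_{e∈δ⁺({r_i})} f_e − ∑_{e∈δ⁻({r_i})} f_e = μ_i at every r_i ∈ R∖{w}, and with zero net outflow at every v ∈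 V∖(R∪{w}). Define x̄^w_{(u,v)} = x^w_{(u,v)} − f_{(u,v)} + f_{(v,u)} for every directed edge (u,v). Then for every U ⊆ V∖{r₀} with R∩U ≠ ∅, letting j = min{ i : r_i ∈ U }, letting (r_i, r_j) be the unique arc of A entering r_j, and letting P = {r_i, r_j}, one has ∑_{e∈δ⁺(U)} x̄^w_e ≥ z^w_P. -/
/-!
Reorienting `f` changes the out-cut of `U` by exactly the net outflow of `f` from `U`, so
`x̄^w(δ⁺(U)) = x^w(δ⁺(U)) - ∑_{r_l ∈ U} μ_l` when `w ∉ U`, and `x^w(δ⁺(U)) + ∑_{r_l ∉ U} μ_l`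
when `w ∈ U`. Since `λ` is nondecreasing the `μ_l` are nonnegative and telescope.
If `w ∈ U`, the indices `l < j` all lie outside `U` and already contribute `λ_{j-1} ≥ z^w_P`.
If `w ∉ U`, let `m` be the last index in `U` at which `λ` strictly increases; then `λ_m` is attained
by a pair containing `r_m ∈ U`, so the cut constraint gives `λ_m ≤ x^w(δ⁺(U))`, while the `μ_l`
of the terminals in `U` sum to at most `λ_m - λ_{j-1}`.
-/

open Finset

noncomputable section

variable {V : Type*}

section Flow

variable [Fintype V] [DecidableEq V]

def netOutflow (f : V → V → ℝ) (v : V) : ℝ :=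
  ∑ u ∈ univ.erase v, f v u - ∑ u ∈ univ.erase v, f u v

/-- The total weight `g(δ⁺(U))` of the arcs leaving `U`. -/
def cutOut (g : V → V → ℝ) (U : Finset V) : ℝ :=
  ∑ u ∈ U, ∑ v ∈ Uᶜ, g u v

lemma netOutflow_eq_sum (f : V → V → ℝ) (v : V) :
    netOutflow f v = ∑ u, (f v u - f u v) := by
  rw [netOutflow, ← sum_sub_distrib]
  exact sum_erase _ (sub_self _)

lemma sum_netOutflow (f : V → V → ℝ) (U : Finset V) :
    ∑ v ∈ U, netOutflow f v = cutOut f U - cutOut (fun u v => f v u) U := by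
  have hinner : ∑ v ∈ U, ∑ u ∈ U, (f v u - f u v) = 0 := by
    rw [sum_congr rfl fun v _ => sum_sub_distrib .., sum_sub_distrib, sum_comm, sub_self]
  simp only [netOutflow_eq_sum, ← sum_add_sum_compl U, sum_add_distrib, hinner, zero_add]
  simp only [cutOut, sum_sub_distrib]

lemma sum_netOutflow_compl (f : V → V → ℝ) (U : Finset V) :
    ∑ v ∈ Uᶜ, netOutflow f v = -∑ v ∈ U, netOutflow f v := by
  have htotal : ∑ v, netOutflow f v = 0 := by
    simp [sum_netOutflow, cutOut]
  rw [← sum_add_sum_compl U] at htotal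
  linarith

lemma cutOut_nonneg {g : V → V → ℝ} (hg : ∀ u v, u ≠ v → 0 ≤ g u v) (U : Finset V) :
    0 ≤ cutOut g U :=
  sum_nonneg fun u hu => sum_nonneg fun v hv =>
    hg u v fun huv => (mem_compl.mp hv) (huv ▸ hu)

lemma cutOut_reorient (x f : V → V → ℝ) (U : Finset V) :
    cutOut (fun u v => x u v - f u v + f v u) U = cutOut x U - ∑ v ∈ U, netOutflow f v := by
  rw [sum_netOutflow]
  simp only [cutOut, sum_add_distrib, sum_sub_distrib]
  ring

lemma sum_netOutflow_eq_sum_demand {f : V → V → ℝ} {T : Finset V} {k : ℕ} {r : ℕ → V}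
    {w : V} {mu : ℕ → ℝ}
    (hr_inj : ∀ i < k, ∀ j < k, r i = r j → i = j)
    (hr_surj : ∀ v ∈ T, ∃ i < k, r i = v)
    (hf_out : ∀ i < k, r i ≠ w → netOutflow f (r i) = mu i)
    (hf_cons : ∀ v, v ∉ T → v ≠ w → netOutflow f v = 0)
    (W : Finset V) (hwW : w ∉ W) :
    ∑ v ∈ W, netOutflow f v = ∑ l ∈ (range k).filter (r · ∈ W), mu l := by
  have hinj : Set.InjOn r ((range k).filter (r · ∈ W)) := fun a ha b hb hab =>
    hr_inj a (mem_range.mp (mem_filter.mp ha).1) b (mem_range.mp (mem_filter.mp hb).1) hab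
  have himage : ((range k).filter (r · ∈ W)).image r ⊆ W := by
    simp only [subset_iff, mem_image, mem_filter]
    rintro _ ⟨l, ⟨-, hl⟩, rfl⟩
    exact hl
  have hrest : ∀ v ∈ W, v ∉ ((range k).filter (r · ∈ W)).image r → netOutflow f v = 0 := by
    refine fun v hv hvr => hf_cons v (fun hvT => hvr ?_) fun h => hwW (h ▸ hv)
    obtain ⟨l, hl, rfl⟩ := hr_surj v hvT
    exact mem_image_of_mem r (mem_filter.mpr ⟨mem_range.mpr hl, hv⟩)
  rw [← sum_subset himage hrest, sum_image hinj]
  refine sum_congr rfl fun l hl => ?_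
  obtain ⟨hlk, hlW⟩ := mem_filter.mp hl
  exact hf_out l (mem_range.mp hlk) fun h => hwW (h ▸ hlW)

end Flow

section PrefixMaximum

/-- `λ_i` is the maximum of this set. -/
def pairValuesUpTo (P : Finset (Finset V)) (z : Finset V → ℝ) (r : ℕ → V) (i : ℕ) : Set ℝ :=
  {s | ∃ p ∈ P, (∃ j ≤ i, r j ∈ p) ∧ s = z p}

variable {P : Finset (Finset V)} {z : Finset V → ℝ} {r : ℕ → V} {k : ℕ} {lam mu : ℕ → ℝ}

lemma le_lam {p : Finset V} {t i : ℕ}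
    (hlam : ∀ i < k, IsGreatest (pairValuesUpTo P z r i) (lam i))
    (hp : p ∈ P) (hrt : r t ∈ p) (hti : t ≤ i) (hik : i < k) : z p ≤ lam i :=
  (hlam i hik).2 ⟨p, hp, ⟨t, hti, hrt⟩, rfl⟩

lemma lam_mono
    (hlam : ∀ i < k, IsGreatest (pairValuesUpTo P z r i) (lam i))
    {i i' : ℕ} (hii' : i ≤ i') (hi'k : i' < k) : lam i ≤ lam i' := by
  obtain ⟨p, hp, ⟨t, hti, hrt⟩, hpi⟩ := (hlam i (hii'.trans_lt hi'k)).1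
  exact hpi ▸ le_lam hlam hp hrt (hti.trans hii') hi'k

lemma exists_pair_eq_lam_of_lt
    (hlam : ∀ i < k, IsGreatest (pairValuesUpTo P z r i) (lam i))
    {m : ℕ} (hm : 0 < m) (hmk : m < k) (hlt : lam (m - 1) < lam m) :
    ∃ p ∈ P, r m ∈ p ∧ z p = lam m := by
  obtain ⟨p, hp, ⟨t, htm, hrt⟩, hpm⟩ := (hlam m hmk).1
  rcases htm.lt_or_eq with htm | rfl
  · have := le_lam hlam hp hrt (Nat.le_sub_one_of_lt htm) (by omega)
    linarith
  · exact ⟨p, hp, hrt, hpm.symm⟩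

lemma mu_nonneg
    (hlam : ∀ i < k, IsGreatest (pairValuesUpTo P z r i) (lam i))
    (hmu : ∀ i < k, mu i = if i = 0 then lam 0 else lam i - lam (i - 1))
    {i : ℕ} (hi : 0 < i) (hik : i < k) : 0 ≤ mu i := by
  rw [hmu i hik, if_neg hi.ne', sub_nonneg]
  exact lam_mono hlam (Nat.sub_le i 1) hik

lemma sum_range_mu (hmu : ∀ i < k, mu i = if i = 0 then lam 0 else lam i - lam (i - 1))
    {n : ℕ} (hnk : n < k) : ∑ l ∈ range (n + 1), mu l = lam n := by
  induction n with
  | zero => simp [hmu 0 hnk]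
  | succ n ih =>
    rw [sum_range_succ, ih (by omega), hmu (n + 1) hnk, if_neg n.succ_ne_zero,
      Nat.add_sub_cancel]
    ring

lemma lam_le_sum_mu
    (hlam : ∀ i < k, IsGreatest (pairValuesUpTo P z r i) (lam i))
    (hmu : ∀ i < k, mu i = if i = 0 then lam 0 else lam i - lam (i - 1))
    {n : ℕ} {I : Finset ℕ} (hnI : range (n + 1) ⊆ I) (hIk : ∀ l ∈ I, l < k) :
    lam n ≤ ∑ l ∈ I, mu l := by
  rw [← sum_range_mu hmu (hIk n (hnI (self_mem_range_succ n)))]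
  refine sum_le_sum_of_subset_of_nonneg hnI fun l hl hln => mu_nonneg hlam hmu ?_ (hIk l hl)
  rw [mem_range] at hln
  omega

lemma sum_mu_le_max
    (hlam : ∀ i < k, IsGreatest (pairValuesUpTo P z r i) (lam i))
    (hmu : ∀ i < k, mu i = if i = 0 then lam 0 else lam i - lam (i - 1))
    {n : ℕ} {J : Finset ℕ} (hJ : ∀ l ∈ J, n < l ∧ l < k) {C : ℝ}
    (hC : ∀ l ∈ J, ∀ p ∈ P, r l ∈ p → z p ≤ C) :
    ∑ l ∈ J, mu l ≤ max 0 (C - lam n) := by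
  rw [← sum_filter_ne_zero]
  rcases (J.filter (mu · ≠ 0)).eq_empty_or_nonempty with hempty | hne
  · simp [hempty]
  set m := (J.filter (mu · ≠ 0)).max' hne
  obtain ⟨hmJ, hmu_m⟩ := mem_filter.mp ((J.filter (mu · ≠ 0)).max'_mem hne)
  obtain ⟨hnm, hmk⟩ := hJ m hmJ
  have hjump : lam (m - 1) < lam m := by
    have := (mu_nonneg hlam hmu (by omega) hmk).lt_of_ne' hmu_m
    rwa [hmu m hmk, if_neg (by omega), sub_pos] at this
  obtain ⟨p, hp, hrp, hpm⟩ := exists_pair_eq_lam_of_lt hlam (by omega) hmk hjump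
  have hsub : J.filter (mu · ≠ 0) ⊆ Ico (n + 1) (m + 1) := fun l hl => by
    have := (J.filter (mu · ≠ 0)).le_max' l hl
    have := hJ l (mem_filter.mp hl).1
    rw [mem_Ico]
    omega
  calc ∑ l ∈ J.filter (mu · ≠ 0), mu l
      ≤ ∑ l ∈ Ico (n + 1) (m + 1), mu l :=
        sum_le_sum_of_subset_of_nonneg hsub fun l hl _ =>
          mu_nonneg hlam hmu (by rw [mem_Ico] at hl; omega) (by rw [mem_Ico] at hl; omega)
    _ = lam m - lam n := by
        rw [sum_Ico_eq_sub _ (by omega), sum_range_mu hmu hmk, sum_range_mu hmu (by omega)]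
    _ ≤ C - lam n := by linarith [hC m hmJ p hp hrp]
    _ ≤ max 0 (C - lam n) := le_max_right _ _

end PrefixMaximum

theorem reoriented_solution_cut_value_general [Fintype V] [DecidableEq V]
    (P : Finset (Finset V))
    (x : V → V → V → ℝ) (z : V → Finset V → ℝ)
    (hfeas : ForestBCRFeasible P x z)
    (k : ℕ) (r : ℕ → V)
    (hr_inj : ∀ i < k, ∀ j < k, r i = r j → i = j)
    (hr_surj : ∀ v ∈ terminals P, ∃ i < k, r i = v)
    (A : Finset (ℕ × ℕ))
    (hA_arcs : ∀ a ∈ A, a.1 < a.2 ∧ a.2 < k ∧ ({r a.1, r a.2} : Finset V) ∈ P)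
    (w : V)
    (lam : ℕ → ℝ)
    (hlam : ∀ i < k,
      IsGreatest {t : ℝ | ∃ p ∈ P, (∃ j ≤ i, r j ∈ p) ∧ t = z w p} (lam i))
    (mu : ℕ → ℝ)
    (hmu : ∀ i < k, mu i = if i = 0 then lam 0 else lam i - lam (i - 1))
    (f : V → V → ℝ)
    (hf_out : ∀ i < k, r i ≠ w →
      (∑ u ∈ Finset.univ.erase (r i), f (r i) u) -
        (∑ u ∈ Finset.univ.erase (r i), f u (r i)) = mu i)
    (hf_cons : ∀ v : V, v ∉ terminals P → v ≠ w →
      (∑ u ∈ Finset.univ.erase v, f v u) -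
        (∑ u ∈ Finset.univ.erase v, f u v) = 0)
    (xbar : V → V → ℝ)
    (hxbar : ∀ u v : V, xbar u v = x w u v - f u v + f v u) :
    ∀ U : Finset V, r 0 ∉ U →
      ∀ j < k, r j ∈ U → (∀ j' < j, r j' ∉ U) →
        ∀ i : ℕ, (i, j) ∈ A →
          z w ({r i, r j} : Finset V) ≤ ∑ u ∈ U, ∑ v ∈ Uᶜ, xbar u v := by
  intro U hU0 j hjk hjU hjmin i hiA
  obtain ⟨hij, -, hpP⟩ := hA_arcs (i, j) hiA
  obtain ⟨n, rfl⟩ : ∃ n, j = n + 1 :=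
    Nat.exists_eq_succ_of_ne_zero fun hj => hU0 (hj ▸ hjU)
  obtain rfl : xbar = fun u v => x w u v - f u v + f v u := funext₂ hxbar
  have hz_lam : z w {r i, r (n + 1)} ≤ lam n :=
    le_lam hlam hpP (mem_insert_self _ _) (by omega) (by omega)
  have hdemand := sum_netOutflow_eq_sum_demand hr_inj hr_surj hf_out hf_cons
  change _ ≤ cutOut _ U
  rw [cutOut_reorient]
  by_cases hwU : w ∈ U
  · have hprefix : lam n ≤ ∑ l ∈ (range k).filter (r · ∈ Uᶜ), mu l := by
      refine lam_le_sum_mu hlam hmu (fun l hl => ?_) fun l hl => mem_range.mp (mem_filter.mp hl).1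
      rw [mem_range] at hl
      exact mem_filter.mpr ⟨mem_range.mpr (by omega), mem_compl.mpr (hjmin l hl)⟩
    have := cutOut_nonneg (hfeas.1 w) U
    rw [← neg_neg (∑ v ∈ U, _), ← sum_netOutflow_compl, hdemand Uᶜ (by simpa)]
    linarith
  · have hz_cut : z w {r i, r (n + 1)} ≤ cutOut (x w) U :=
      hfeas.2.2.2 w _ hpP U hwU ⟨r (n + 1), mem_inter.mpr ⟨by simp, hjU⟩⟩
    have hJ : ∀ l ∈ (range k).filter (r · ∈ U), n < l ∧ l < k := fun l hl => by
      obtain ⟨hlk, hlU⟩ := mem_filter.mp hl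
      exact ⟨not_le.mp fun hln => hjmin l (Nat.lt_succ_of_le hln) hlU, mem_range.mp hlk⟩
    have hC : ∀ l ∈ (range k).filter (r · ∈ U), ∀ p ∈ P, r l ∈ p → z w p ≤ cutOut (x w) U :=
      fun l hl p hp hlp =>
        hfeas.2.2.2 w p hp U hwU ⟨r l, mem_inter.mpr ⟨hlp, (mem_filter.mp hl).2⟩⟩
    rw [hdemand U hwU]
    rcases le_max_iff.mp (sum_mu_le_max hlam hmu hJ hC) with h | h <;> linarith

/-- With a topologically numbered arborescence `A` of demand pairs on
the terminals rooted at `r 0`, and a flow `f` as in the flow lemma, the reoriented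
vector `x̄^w = x^w − f + f^reverse` satisfies, for every set `U ∌ r 0` containing a
terminal: if `r j` is the minimum-index terminal in `U` and `(r i, r j)` is the arc of
`A` entering `r j`, then `x̄^w(δ⁺(U)) ≥ z^w_{{r i, r j}}`. -/
theorem reoriented_solution_cut_value [Fintype V] [DecidableEq V]
    (P : Finset (Finset V)) (hP : ∀ p ∈ P, p.card = 2)
    (x : V → V → V → ℝ) (z : V → Finset V → ℝ)
    (hfeas : ForestBCRFeasible P x z)
    (k : ℕ) (r : ℕ → V)
    (hr_mem : ∀ i < k, r i ∈ terminals P)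
    (hr_inj : ∀ i < k, ∀ j < k, r i = r j → i = j)
    (hr_surj : ∀ v ∈ terminals P, ∃ i < k, r i = v)
    (A : Finset (ℕ × ℕ))
    (hA_arcs : ∀ a ∈ A, a.1 < a.2 ∧ a.2 < k ∧ ({r a.1, r a.2} : Finset V) ∈ P)
    (hA_unique : ∀ j : ℕ, 0 < j → j < k → ∃! i : ℕ, (i, j) ∈ A)
    (hA_root : ∀ i : ℕ, (i, 0) ∉ A)
    (w : V)
    (lam : ℕ → ℝ)
    (hlam : ∀ i < k,
      IsGreatest {t : ℝ | ∃ p ∈ P, (∃ j ≤ i, r j ∈ p) ∧ t = z w p} (lam i))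
    (mu : ℕ → ℝ)
    (hmu : ∀ i < k, mu i = if i = 0 then lam 0 else lam i - lam (i - 1))
    (f : V → V → ℝ)
    (hf_cap : ∀ u v : V, u ≠ v → 0 ≤ f u v ∧ f u v ≤ x w u v)
    (hf_out : ∀ i < k, r i ≠ w →
      (∑ u ∈ Finset.univ.erase (r i), f (r i) u) -
        (∑ u ∈ Finset.univ.erase (r i), f u (r i)) = mu i)
    (hf_cons : ∀ v : V, v ∉ terminals P → v ≠ w →
      (∑ u ∈ Finset.univ.erase v, f v u) -
        (∑ u ∈ Finset.univ.erase v, f u v) = 0)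
    (xbar : V → V → ℝ)
    (hxbar : ∀ u v : V, xbar u v = x w u v - f u v + f v u) :
    ∀ U : Finset V, r 0 ∉ U →
      ∀ j < k, r j ∈ U → (∀ j' < j, r j' ∉ U) →
        ∀ i : ℕ, (i, j) ∈ A →
          z w ({r i, r j} : Finset V) ≤ ∑ u ∈ U, ∑ v ∈ Uᶜ, xbar u v :=
  reoriented_solution_cut_value_general P x z hfeas k r hr_inj hr_surj A hA_arcs w lam hlam mu hmu f
    hf_out hf_cons xbar hxbar
end
end

section
/- Let (x,z) be a feasible solution to Forest-BCR. Then for every pair P ∈ 𝒫 and every set U ⊆ V with P∩U ≠ ∅ and P∖U ≠ ∅, one has ∑_{r∈V} ( ∑_{e∈δ⁺(U)} x^{r}_e + ∑_{e∈δ⁻(U)} x^{r}_e ) ≥ 1. (In particular, the undirected vector x̃ with x̃_{{u,v}} = ∑_{r∈V} (x^r_{(u,v)} + x^r_{(v,u)}) is a feasible solution to the undirected cut relaxation of Steiner Forest.) -/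
open Finset

noncomputable section

variable {V : Type*}

/-! For each root `r`, one of `U` and `Uᶜ` avoids `r` and meets the pair `p`, so its cut
constraint bounds `z^r_p` by the `x^r`-value crossing `U` in one direction. Summing over `r`
and using `∑ r, z^r_p = 1` gives the bound. -/

namespace ForestBCRFeasible

variable [Fintype V] [DecidableEq V] {P : Finset (Finset V)} {x : V → V → V → ℝ}
  {z : V → Finset V → ℝ}

theorem cut_nonneg (hfeas : ForestBCRFeasible P x z) (r : V) (A : Finset V) :
    0 ≤ ∑ u ∈ A, ∑ v ∈ Aᶜ, x r u v :=
  sum_nonneg fun _ hu => sum_nonneg fun _ hv =>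
    hfeas.1 r _ _ fun huv => mem_compl.mp hv (huv ▸ hu)

theorem le_cut_into (hfeas : ForestBCRFeasible P x z) {p : Finset V} (hp : p ∈ P)
    {U : Finset V} {r : V} (hr : r ∈ U) (hpU : (p \ U).Nonempty) :
    z r p ≤ ∑ u ∈ Uᶜ, ∑ v ∈ U, x r u v := by
  have hpUc : (p ∩ Uᶜ).Nonempty := by rwa [← sdiff_eq_inter_compl]
  simpa only [compl_compl] using hfeas.2.2.2 r p hp Uᶜ (notMem_compl.mpr hr) hpUc

theorem le_cut_out_add_cut_into (hfeas : ForestBCRFeasible P x z) {p : Finset V} (hp : p ∈ P)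
    {U : Finset V} (hpU : (p ∩ U).Nonempty) (hpUc : (p \ U).Nonempty) (r : V) :
    z r p ≤ (∑ u ∈ U, ∑ v ∈ Uᶜ, x r u v) + ∑ u ∈ Uᶜ, ∑ v ∈ U, x r u v := by
  by_cases hr : r ∈ U
  · exact (hfeas.le_cut_into hp hr hpUc).trans (le_add_of_nonneg_left (hfeas.cut_nonneg r U))
  · have hinto := hfeas.cut_nonneg r Uᶜ
    rw [compl_compl] at hinto
    exact (hfeas.2.2.2 r p hp U hr hpU).trans (le_add_of_nonneg_right hinto)

end ForestBCRFeasible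

theorem forestBCR_implies_undirected_cut_relaxation_general [Fintype V] [DecidableEq V]
    (P : Finset (Finset V))
    (x : V → V → V → ℝ) (z : V → Finset V → ℝ)
    (hfeas : ForestBCRFeasible P x z) :
    ∀ p ∈ P, ∀ U : Finset V, (p ∩ U).Nonempty → (p \ U).Nonempty →
      1 ≤ ∑ r : V, ((∑ u ∈ U, ∑ v ∈ Uᶜ, x r u v) + ∑ u ∈ Uᶜ, ∑ v ∈ U, x r u v) := by
  intro p hp U hpU hpUc
  calc (1 : ℝ) = ∑ r : V, z r p := (hfeas.2.2.1 p hp).symm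
    _ ≤ _ := sum_le_sum fun r _ => hfeas.le_cut_out_add_cut_into hp hpU hpUc r

/-- Forest-BCR strengthens the undirected cut relaxation: for every
feasible solution `(x, z)`, every pair `P ∈ 𝒫`, and every set `U` separating the two
vertices of the pair, the total `x`-value of the edges crossing `U` (in either
direction) is at least `1`. -/
theorem forestBCR_implies_undirected_cut_relaxation [Fintype V] [DecidableEq V]
    (P : Finset (Finset V)) (hP : ∀ p ∈ P, p.card = 2)
    (x : V → V → V → ℝ) (z : V → Finset V → ℝ)
    (hfeas : ForestBCRFeasible P x z) :
    ∀ p ∈ P, ∀ U : Finset V, (p ∩ U).Nonempty → (p \ U).Nonempty →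
      1 ≤ ∑ r : V, ((∑ u ∈ U, ∑ v ∈ Uᶜ, x r u v) + ∑ u ∈ Uᶜ, ∑ v ∈ U, x r u v) :=
  forestBCR_implies_undirected_cut_relaxation_general P x z hfeas
end
end

section
/- Let q ≥ 1 and let G_q = (V_q, E_q) be the graph with vertices s₁,…,s_q, v₁,…,v_q, t₁,…,t_q (3q distinct vertices) and edges {s_i, v_j} and {v_i, t_j} for all i, j ∈ {1,…,q}. Let 𝒫_q consist of the pairs {s_i, t_i} for 1 ≤ i ≤ q and {v_i, v_{i+1}} for 1 ≤ i ≤ q−1. Then every edge set F ⊆ E_q such that for each pair P ∈ 𝒫_q both vertices of P lie in the same connected component of (V_q, F) satisfies |F| ≥ 3q − 1. -/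
open Finset

noncomputable section

variable {V : Type*}

/-- The graph `G_q` on vertices `(0, i) = s_i`, `(1, i) = v_i`, `(2, i) = t_i`
(for `i : Fin q`), whose edges are all pairs `{s_i, v_j}` and `{v_i, t_j}`. -/
def gridGraph (q : ℕ) : SimpleGraph (Fin 3 × Fin q) where
  Adj a b := (a.1 = 0 ∧ b.1 = 1) ∨ (a.1 = 1 ∧ b.1 = 0) ∨
    (a.1 = 1 ∧ b.1 = 2) ∨ (a.1 = 2 ∧ b.1 = 1)
  symm := ⟨by intro a b h; tauto⟩
  loopless := ⟨by
    intro a h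
    rcases h with ⟨h1, h2⟩ | ⟨h1, h2⟩ | ⟨h1, h2⟩ | ⟨h1, h2⟩ <;>
      exact absurd (h1.symm.trans h2) (by decide)⟩

/-- A connected graph whose edge set is contained in a finset `F` satisfies
`#V ≤ #F + 1`. -/
lemma connected_card_le_aux {V : Type*} [Fintype V] [DecidableEq V]
    (G : SimpleGraph V) (hG : G.Connected) (F : Finset (Sym2 V))
    (hF : G.edgeSet ⊆ ↑F) : Fintype.card V ≤ F.card + 1 := by
  classical
  obtain ⟨v₀⟩ := hG.nonempty
  have key : ∀ u : V, u ≠ v₀ → ∃ w : V, G.Adj u w ∧ G.dist w v₀ < G.dist u v₀ := by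
    intro u hu
    obtain ⟨p, hp⟩ := (hG.preconnected u v₀).exists_walk_length_eq_dist
    cases p with
    | nil => exact absurd rfl hu
    | cons h q =>
      refine ⟨_, h, ?_⟩
      have h1 : G.dist _ v₀ ≤ q.length := SimpleGraph.dist_le q
      simp only [SimpleGraph.Walk.length_cons] at hp
      omega
  choose w hadj hdist using key
  have hinj : Set.InjOn (fun u : V => if h : u = v₀ then (s(v₀, v₀) : Sym2 V)
      else s(u, w u h)) ↑(Finset.univ.erase v₀) := by
    intro a ha b hb hab
    simp only [Finset.coe_erase, Set.mem_diff, Set.mem_singleton_iff,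
      Finset.mem_erase, Finset.mem_coe] at ha hb
    have ha' : a ≠ v₀ := by simpa using ha.2
    have hb' : b ≠ v₀ := by simpa using hb.2
    simp only [dif_neg ha', dif_neg hb'] at hab
    rw [Sym2.eq_iff] at hab
    rcases hab with ⟨h1, _⟩ | ⟨h1, h2⟩
    · exact h1
    · exfalso
      have d1 := hdist a ha'
      have d2 := hdist b hb'
      rw [← h1] at d2
      rw [h2] at d1
      omega
  have hmaps : ∀ u ∈ (Finset.univ.erase v₀), (if h : u = v₀ then (s(v₀, v₀) : Sym2 V)
      else s(u, w u h)) ∈ F := by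
    intro u hu
    have hu' : u ≠ v₀ := Finset.ne_of_mem_erase hu
    rw [dif_neg hu']
    exact hF ((G.mem_edgeSet).2 (hadj u hu'))
  have hcard := Finset.card_le_card_of_injOn _ hmaps hinj
  have : (Finset.univ.erase v₀).card = Fintype.card V - 1 := by
    rw [Finset.card_erase_of_mem (Finset.mem_univ v₀), Finset.card_univ]
  have hpos : 0 < Fintype.card V := Fintype.card_pos_iff.mpr ⟨v₀⟩
  omega

/-- In the instance `(G_q, 𝒫_q)`, every edge set `F ⊆ E_q` connecting
`s_i` to `t_i` for all `i` and `v_i` to `v_{i+1}` for all `i < q − 1` has at least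
`3q − 1` edges. -/
theorem gap_instance_integral_lower_bound (q : ℕ) (hq : 1 ≤ q)
    (F : Finset (Sym2 (Fin 3 × Fin q)))
    (hF : (↑F : Set (Sym2 (Fin 3 × Fin q))) ⊆ (gridGraph q).edgeSet)
    (hst : ∀ i : Fin q,
      (SimpleGraph.fromEdgeSet (↑F : Set (Sym2 (Fin 3 × Fin q)))).Reachable
        ((0 : Fin 3), i) ((2 : Fin 3), i))
    (hvv : ∀ i j : Fin q, (i : ℕ) + 1 = (j : ℕ) →
      (SimpleGraph.fromEdgeSet (↑F : Set (Sym2 (Fin 3 × Fin q)))).Reachable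
        ((1 : Fin 3), i) ((1 : Fin 3), j)) :
    3 * q - 1 ≤ F.card := by
  classical
  set G' := SimpleGraph.fromEdgeSet (↑F : Set (Sym2 (Fin 3 × Fin q))) with hG'
  have hAdjGrid : ∀ {u v : Fin 3 × Fin q}, G'.Adj u v → (gridGraph q).Adj u v := by
    intro u v h
    rw [hG', SimpleGraph.fromEdgeSet_adj] at h
    exact (gridGraph q).mem_edgeSet.mp (hF h.1)
  set v₀ : Fin 3 × Fin q := ((1 : Fin 3), (⟨0, hq⟩ : Fin q)) with hv₀
  -- every middle vertex reaches v₀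
  have chain : ∀ n (hn : n < q), G'.Reachable ((1 : Fin 3), (⟨n, hn⟩ : Fin q)) v₀ := by
    intro n
    induction n with
    | zero => intro hn; exact SimpleGraph.Reachable.refl _
    | succ m ih =>
      intro hn
      have hm : m < q := Nat.lt_of_succ_lt hn
      exact ((hvv ⟨m, hm⟩ ⟨m + 1, hn⟩ rfl).symm).trans (ih hm)
  have chain' : ∀ i : Fin q, G'.Reachable ((1 : Fin 3), i) v₀ := by
    intro ⟨n, hn⟩; exact chain n hn
  -- first step of a nontrivial reachability
  have first_step : ∀ {u v : Fin 3 × Fin q}, G'.Reachable u v → u ≠ v →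
      ∃ w, G'.Adj u w ∧ G'.Reachable w v := by
    intro u v h hne
    obtain ⟨p⟩ := h
    cases p with
    | nil => exact absurd rfl hne
    | cons h q => exact ⟨_, h, ⟨q⟩⟩
  have reach_s : ∀ i : Fin q, G'.Reachable ((0 : Fin 3), i) v₀ := by
    intro i
    obtain ⟨w, hadj, _⟩ := first_step (hst i) (by simp [Prod.ext_iff])
    have hg := hAdjGrid hadj
    have hw1 : w.1 = 1 := by
      rcases hg with ⟨h1, h2⟩ | ⟨h1, h2⟩ | ⟨h1, h2⟩ | ⟨h1, h2⟩ <;>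
        first
          | exact h2
          | exact absurd (show (0 : Fin 3) = 1 from h1) (by decide)
          | exact absurd (show (0 : Fin 3) = 2 from h1) (by decide)
    have hww : w = ((1 : Fin 3), w.2) := by
      rw [Prod.ext_iff]; exact ⟨hw1, rfl⟩
    exact hadj.reachable.trans (hww ▸ chain' w.2)
  have reach_t : ∀ i : Fin q, G'.Reachable ((2 : Fin 3), i) v₀ := by
    intro i
    obtain ⟨w, hadj, _⟩ := first_step (hst i).symm (by simp [Prod.ext_iff])
    have hg := hAdjGrid hadj
    have hw1 : w.1 = 1 := by
      rcases hg with ⟨h1, h2⟩ | ⟨h1, h2⟩ | ⟨h1, h2⟩ | ⟨h1, h2⟩ <;>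
        first
          | exact h2
          | exact absurd (show (2 : Fin 3) = 1 from h1) (by decide)
          | exact absurd (show (2 : Fin 3) = 0 from h1) (by decide)
    have hww : w = ((1 : Fin 3), w.2) := by
      rw [Prod.ext_iff]; exact ⟨hw1, rfl⟩
    exact hadj.reachable.trans (hww ▸ chain' w.2)
  have hconn : G'.Connected := by
    rw [SimpleGraph.connected_iff]
    refine ⟨?_, ⟨v₀⟩⟩
    intro a b
    have reach_all : ∀ u : Fin 3 × Fin q, G'.Reachable u v₀ := by
      intro ⟨c, i⟩
      fin_cases c
      · exact reach_s i
      · exact chain' i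
      · exact reach_t i
    exact (reach_all a).trans (reach_all b).symm
  have hsub : G'.edgeSet ⊆ ↑F := by
    rw [hG', SimpleGraph.edgeSet_fromEdgeSet]
    exact Set.diff_subset
  have hmain := connected_card_le_aux G' hconn F hsub
  have hcardV : Fintype.card (Fin 3 × Fin q) = 3 * q := by
    simp [Fintype.card_prod]
  omega
end
end

section
/- Let (x,z) be a feasible, half-integral, fully reduced well structured solution to Forest-BCR, and let v ∈ V∖R be a Steiner vertex (a non-terminal) with ∑_{r∈V}(∑_{e∈δ⁺({v})} x^r_e + ∑_{e∈δ⁻({v})} x^r_e) > 0. Then ∑_{r∈V}(∑_{e∈δ⁺({v})} x^r_e + ∑_{e∈δ⁻({v})} x^r_e) ≥ 3/2. -/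
/-!
Fix a root `r`. If an arc `(a, v)` carries flow, minimality (no variable can be decreased)
yields a tight cut `U` with `a ∈ U`, `v ∉ U`, and feasibility of `U ∪ {v}` forces at least as
much flow out of `v` as into it from `U`; `r ≠ v` because a tight cut crossed by flow has
`z r p > 0`, making `r` a terminal. Symmetrically, for an arc `(v, b)` one removes `v` from a
tight cut, which stays valid since `v` lies in no pair. With half-integrality, every root using
`v` thus sees at least `1/2` in and `1/2` out, so a total below `3/2` leaves a single root with a
single arc `(a, v)` in and a single arc `(v, b)` out. Either the tight cut of `(a, v)` (if
`a = b`) or the obstruction to splitting off `(a, v), (v, b)` (if `a ≠ b`) gives a tight cut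
separating `v` from both `a` and `b`, across which the above flow inequality fails.
-/

open Finset

noncomputable section

variable {V : Type*}

/-- The splitting-off operation at root `r`: decrease `x^r_{(u,v)}` and `x^r_{(v,w)}`
by `ε` and increase `x^r_{(u,w)}` by `ε`. -/
def splitOff [DecidableEq V] (x : V → V → V → ℝ) (r u v w : V) (ε : ℝ) :
    V → V → V → ℝ :=
  fun r' a b =>
    if r' = r then
      x r' a b + (if a = u ∧ b = w then ε else 0)
        - (if a = u ∧ b = v then ε else 0) - (if a = v ∧ b = w then ε else 0)
    else x r' a b

/-- Decreasing the single variable `x^r_{(u,v)}` by `ε`. -/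
def reduceOne [DecidableEq V] (x : V → V → V → ℝ) (r u v : V) (ε : ℝ) :
    V → V → V → ℝ :=
  fun r' a b => if r' = r ∧ a = u ∧ b = v then x r' a b - ε else x r' a b

/-- A Forest-BCR solution is well structured if all roots with positive `z` are
terminals and no splitting-off operation preserves feasibility. -/
def WellStructured [Fintype V] [DecidableEq V] (P : Finset (Finset V))
    (x : V → V → V → ℝ) (z : V → Finset V → ℝ) : Prop :=
  (∀ r : V, r ∉ terminals P → ∀ p ∈ P, z r p = 0) ∧
  (∀ r u v w : V, u ≠ v → v ≠ w → u ≠ w → ∀ ε : ℝ, 0 < ε →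
    ¬ ForestBCRFeasible P (splitOff x r u v w ε) z)

/-- A Forest-BCR solution is fully reduced if it is well structured and no single
variable `x^r_e` can be decreased while preserving feasibility. -/
def FullyReduced [Fintype V] [DecidableEq V] (P : Finset (Finset V))
    (x : V → V → V → ℝ) (z : V → Finset V → ℝ) : Prop :=
  WellStructured P x z ∧
  ∀ r u v : V, u ≠ v → ∀ ε : ℝ, 0 < ε →
    ¬ ForestBCRFeasible P (reduceOne x r u v ε) z

lemma one_half_le_of_pos {y : ℝ} (hy : ∃ n : ℤ, y = n / 2) (hpos : 0 < y) : 1 / 2 ≤ y := by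
  obtain ⟨n, rfl⟩ := hy
  have hn : (0 : ℤ) < n := by exact_mod_cast (by linarith : (0 : ℝ) < n)
  have : (1 : ℝ) ≤ n := by exact_mod_cast hn
  linarith

lemma exists_pos_of_sum_pos {ι : Type*} {s : Finset ι} {f : ι → ℝ} (h : 0 < ∑ i ∈ s, f i) :
    ∃ i ∈ s, 0 < f i :=
  exists_lt_of_sum_lt (by simpa using h)

lemma eq_zero_of_sum_lt_two_mul {ι : Type*} {s : Finset ι} {f : ι → ℝ} {c : ℝ}
    (h0 : ∀ i ∈ s, 0 ≤ f i) (hc : ∀ i ∈ s, 0 < f i → c ≤ f i) (hsum : ∑ i ∈ s, f i < 2 * c)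
    {i j : ι} (hi : i ∈ s) (hj : j ∈ s) (hij : i ≠ j) (hfi : 0 < f i) : f j = 0 := by
  by_contra hfj
  have := add_le_sum h0 hi hj hij
  linarith [hc i hi hfi, hc j hj ((h0 j hj).lt_of_ne' hfj)]

lemma exists_pos_forall_ne_eq_zero_of_sum_lt_one {ι : Type*} {s : Finset ι} {f : ι → ℝ}
    (h0 : ∀ i ∈ s, 0 ≤ f i) (hhalf : ∀ i ∈ s, ∃ n : ℤ, f i = n / 2)
    (hpos : 0 < ∑ i ∈ s, f i) (hlt : ∑ i ∈ s, f i < 1) :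
    ∃ i ∈ s, 0 < f i ∧ ∀ j ∈ s, j ≠ i → f j = 0 := by
  obtain ⟨i, hi, hfi⟩ := exists_pos_of_sum_pos hpos
  exact ⟨i, hi, hfi, fun j hj hji => eq_zero_of_sum_lt_two_mul h0
    (fun k hk => one_half_le_of_pos (hhalf k hk)) (by linarith) hi hj hji.symm hfi⟩

section

open Filter Topology

variable [DecidableEq V]

lemma sum_sum_ite_and_eq (U W : Finset V) (a b : V) (ε : ℝ) :
    ∑ u ∈ U, ∑ w ∈ W, (if u = a ∧ w = b then ε else 0) = if a ∈ U ∧ b ∈ W then ε else 0 := by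
  simp [ite_and, sum_ite_eq']

lemma reduceOne_nonneg {x : V → V → V → ℝ} (hx : ∀ r u w : V, u ≠ w → 0 ≤ x r u w)
    {r a b : V} {ε : ℝ} (hε : ε ≤ x r a b) (r' u w : V) (huw : u ≠ w) :
    0 ≤ reduceOne x r a b ε r' u w := by
  unfold reduceOne
  split_ifs with h
  · obtain ⟨rfl, rfl, rfl⟩ := h
    linarith
  · exact hx r' u w huw

lemma splitOff_nonneg {x : V → V → V → ℝ} (hx : ∀ r u w : V, u ≠ w → 0 ≤ x r u w)
    {r u v w : V} {ε : ℝ} (huv : u ≠ v) (hε : 0 ≤ ε) (huvε : ε ≤ x r u v) (hvwε : ε ≤ x r v w)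
    (r' a b : V) (hab : a ≠ b) : 0 ≤ splitOff x r u v w ε r' a b := by
  have := hx r' a b hab
  unfold splitOff
  split_ifs <;> grind

variable [Fintype V]

def cutVal (x : V → V → V → ℝ) (r : V) (U : Finset V) : ℝ :=
  ∑ u ∈ U, ∑ w ∈ Uᶜ, x r u w

def outFlow (x : V → V → V → ℝ) (r v : V) : ℝ :=
  ∑ w ∈ univ.erase v, x r v w

def inFlow (x : V → V → V → ℝ) (r v : V) : ℝ :=
  ∑ w ∈ univ.erase v, x r w v

def IsTightCut (P : Finset (Finset V)) (x : V → V → V → ℝ) (z : V → Finset V → ℝ)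
    (r : V) (p U : Finset V) : Prop :=
  p ∈ P ∧ r ∉ U ∧ (p ∩ U).Nonempty ∧ cutVal x r U ≤ z r p

lemma cutVal_insert (x : V → V → V → ℝ) (r v : V) {U : Finset V} (hv : v ∉ U) :
    cutVal x r (insert v U) =
      cutVal x r U - ∑ u ∈ U, x r u v + ∑ w ∈ (insert v U)ᶜ, x r v w := by
  have hsplit : ∀ u, ∑ w ∈ Uᶜ, x r u w = x r u v + ∑ w ∈ (insert v U)ᶜ, x r u w := fun u => by
    rw [compl_insert, add_sum_erase _ _ (mem_compl.2 hv)]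
  simp only [cutVal, sum_insert hv, hsplit, sum_add_distrib]
  ring

lemma cutVal_reduceOne (x : V → V → V → ℝ) (r a b : V) (ε : ℝ) (r' : V) (U : Finset V) :
    cutVal (reduceOne x r a b ε) r' U =
      cutVal x r' U - if r' = r ∧ a ∈ U ∧ b ∉ U then ε else 0 := by
  by_cases hr : r' = r
  · subst hr
    have hpt : ∀ u w, reduceOne x r' a b ε r' u w = x r' u w - if u = a ∧ w = b then ε else 0 :=
      fun u w => by simp only [reduceOne, true_and]; split_ifs <;> ring
    simp only [cutVal, hpt, sum_sub_distrib, sum_sum_ite_and_eq, true_and, mem_compl]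
  · simp [cutVal, reduceOne, hr]

lemma cutVal_splitOff (x : V → V → V → ℝ) (r u v w : V) (ε : ℝ) (r' : V) (U : Finset V) :
    cutVal (splitOff x r u v w ε) r' U = cutVal x r' U -
      if r' = r ∧ (u ∈ U ∧ v ∉ U ∧ w ∈ U ∨ u ∉ U ∧ v ∈ U ∧ w ∉ U) then ε else 0 := by
  by_cases hr : r' = r
  · subst hr
    have hpt : ∀ a b, splitOff x r' u v w ε r' a b = x r' a b +
        (if a = u ∧ b = w then ε else 0) - (if a = u ∧ b = v then ε else 0) -
        (if a = v ∧ b = w then ε else 0) := fun a b => by simp [splitOff]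
    simp only [cutVal, hpt, sum_add_distrib, sum_sub_distrib, sum_sum_ite_and_eq, true_and,
      mem_compl]
    by_cases hu : u ∈ U <;> by_cases hv : v ∈ U <;> by_cases hw : w ∈ U <;> simp [hu, hv, hw]
  · simp [cutVal, splitOff, hr]

variable {P : Finset (Finset V)} {x : V → V → V → ℝ} {z : V → Finset V → ℝ}

lemma le_cutVal (hx : ∀ r u w : V, u ≠ w → 0 ≤ x r u w) (r : V)
    {U : Finset V} {a b : V} (ha : a ∈ U) (hb : b ∉ U) : x r a b ≤ cutVal x r U := by
  have hnonneg : ∀ u ∈ U, ∀ w ∈ Uᶜ, 0 ≤ x r u w := fun u hu w hw =>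
    hx r u w (ne_of_mem_of_not_mem hu (mem_compl.1 hw))
  calc x r a b ≤ ∑ w ∈ Uᶜ, x r a w := single_le_sum (hnonneg a ha) (mem_compl.2 hb)
    _ ≤ cutVal x r U := single_le_sum (fun u hu => sum_nonneg (hnonneg u hu)) ha

lemma sum_le_outFlow (hx : ∀ r u w : V, u ≠ w → 0 ≤ x r u w) (r : V) {v : V} {s : Finset V}
    (hvs : v ∉ s) : ∑ w ∈ s, x r v w ≤ outFlow x r v :=
  sum_le_sum_of_subset_of_nonneg (fun w hw => mem_erase.2 ⟨ne_of_mem_of_not_mem hw hvs,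
    mem_univ w⟩) fun w hw _ => hx r v w (ne_of_mem_erase hw).symm

lemma sum_le_inFlow (hx : ∀ r u w : V, u ≠ w → 0 ≤ x r u w) (r : V) {v : V} {s : Finset V}
    (hvs : v ∉ s) : ∑ u ∈ s, x r u v ≤ inFlow x r v :=
  sum_le_sum_of_subset_of_nonneg (fun w hw => mem_erase.2 ⟨ne_of_mem_of_not_mem hw hvs,
    mem_univ w⟩) fun w hw _ => hx r w v (ne_of_mem_erase hw)

lemma outFlow_nonneg (hx : ∀ r u w : V, u ≠ w → 0 ≤ x r u w) (r v : V) : 0 ≤ outFlow x r v :=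
  sum_nonneg fun w hw => hx r v w (ne_of_mem_erase hw).symm

lemma inFlow_nonneg (hx : ∀ r u w : V, u ≠ w → 0 ≤ x r u w) (r v : V) : 0 ≤ inFlow x r v :=
  sum_nonneg fun u hu => hx r u v (ne_of_mem_erase hu)

lemma single_le_outFlow (hx : ∀ r u w : V, u ≠ w → 0 ≤ x r u w) (r : V) {v w : V}
    (hw : w ≠ v) : x r v w ≤ outFlow x r v :=
  single_le_sum (fun w hw => hx r v w (ne_of_mem_erase hw).symm) (mem_erase.2 ⟨hw, mem_univ w⟩)

lemma single_le_inFlow (hx : ∀ r u w : V, u ≠ w → 0 ≤ x r u w) (r : V) {v u : V}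
    (hu : u ≠ v) : x r u v ≤ inFlow x r v :=
  single_le_sum (fun u hu => hx r u v (ne_of_mem_erase hu)) (mem_erase.2 ⟨hu, mem_univ u⟩)

lemma notMem_of_notMem_terminals {v : V} (hv : v ∉ terminals P)
    {p : Finset V} (hp : p ∈ P) : v ∉ p :=
  fun hvp => hv (mem_filter.2 ⟨mem_univ v, p, hp, hvp⟩)

namespace IsTightCut

variable {r : V} {p U : Finset V}

lemma sum_in_le_sum_out (hfeas : ForestBCRFeasible P x z) (hU : IsTightCut P x z r p U)
    {v : V} (hrv : r ≠ v) (hvU : v ∉ U) :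
    ∑ u ∈ U, x r u v ≤ ∑ w ∈ (insert v U)ᶜ, x r v w := by
  obtain ⟨hp, hrU, hne, htight⟩ := hU
  have hcut := hfeas.2.2.2 r p hp (insert v U) (by simp [hrv, hrU])
    (hne.mono (inter_subset_inter_left (subset_insert v U)))
  rw [← cutVal, cutVal_insert x r v hvU] at hcut
  linarith

lemma sum_out_le_sum_in (hfeas : ForestBCRFeasible P x z) (hU : IsTightCut P x z r p U)
    {v : V} (hvp : v ∉ p) (hvU : v ∈ U) :
    ∑ w ∈ Uᶜ, x r v w ≤ ∑ u ∈ U.erase v, x r u v := by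
  obtain ⟨hp, hrU, ⟨y, hy⟩, htight⟩ := hU
  rw [mem_inter] at hy
  have hyv : y ≠ v := ne_of_mem_of_not_mem hy.1 hvp
  have hcut := hfeas.2.2.2 r p hp (U.erase v) (fun h => hrU (mem_of_mem_erase h))
    ⟨y, mem_inter.2 ⟨hy.1, mem_erase.2 ⟨hyv, hy.2⟩⟩⟩
  have hinsert := cutVal_insert x r v (notMem_erase v U)
  rw [insert_erase hvU] at hinsert
  rw [← cutVal] at hcut
  linarith

lemma root_mem_terminals (hfeas : ForestBCRFeasible P x z) (hws : WellStructured P x z)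
    (hU : IsTightCut P x z r p U) {a b : V} (ha : a ∈ U) (hb : b ∉ U) (hab : 0 < x r a b) :
    r ∈ terminals P := by
  by_contra hr
  have := hws.1 r hr p hU.1
  linarith [hU.2.2.2, le_cutVal hfeas.1 r ha hb]

end IsTightCut

lemma exists_isTightCut_of_forall_not_feasible (hfeas : ForestBCRFeasible P x z)
    (y : ℝ → V → V → V → ℝ) (r : V) (S : Finset V → Prop) [DecidablePred S]
    (hy_nonneg : ∀ᶠ ε in 𝓝[>] 0, ∀ r' a b : V, a ≠ b → 0 ≤ y ε r' a b)
    (hy_cut : ∀ ε r' U, cutVal (y ε) r' U = cutVal x r' U - if r' = r ∧ S U then ε else 0)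
    (hy_infeasible : ∀ ε > 0, ¬ ForestBCRFeasible P (y ε) z) :
    ∃ p U, IsTightCut P x z r p U ∧ S U := by
  by_contra! hnone
  have hslack : ∀ q : Finset V × Finset V, q.1 ∈ P ∧ r ∉ q.2 ∧ (q.1 ∩ q.2).Nonempty ∧ S q.2 →
      ∀ᶠ ε in 𝓝[>] 0, ε ≤ cutVal x r q.2 - z r q.1 := by
    rintro ⟨p, U⟩ ⟨hp, hrU, hne, hS⟩
    have : z r p < cutVal x r U := not_le.1 fun h => hnone p U ⟨hp, hrU, hne, h⟩ hS
    exact nhdsWithin_le_nhds (eventually_le_nhds (sub_pos.2 this))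
  have hsmall := ((eventually_mem_nhdsWithin (a := (0 : ℝ)) (s := Set.Ioi 0)).and
    hy_nonneg).and (eventually_all.2 fun q => eventually_imp_distrib_left.2 (hslack q))
  obtain ⟨ε, ⟨hε, hnonneg⟩, hle⟩ := hsmall.exists
  refine hy_infeasible ε hε ⟨hnonneg, hfeas.2.1, hfeas.2.2.1, fun r' p hp U hrU hne => ?_⟩
  change z r' p ≤ cutVal (y ε) r' U
  rw [hy_cut]
  split_ifs with hc
  · obtain ⟨rfl, hS⟩ := hc
    linarith [hle (p, U) ⟨hp, hrU, hne, hS⟩]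
  · rw [sub_zero]
    exact hfeas.2.2.2 r' p hp U hrU hne

lemma exists_isTightCut_of_reduceOne (hfeas : ForestBCRFeasible P x z) {r a b : V}
    (hmin : ∀ ε > 0, ¬ ForestBCRFeasible P (reduceOne x r a b ε) z) (hab : 0 < x r a b) :
    ∃ p U, IsTightCut P x z r p U ∧ a ∈ U ∧ b ∉ U :=
  exists_isTightCut_of_forall_not_feasible hfeas _ r (fun U => a ∈ U ∧ b ∉ U)
    (((eventually_le_nhds hab).filter_mono nhdsWithin_le_nhds).mono fun _ hε =>
      reduceOne_nonneg hfeas.1 hε)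
    (cutVal_reduceOne x r a b) hmin

lemma exists_isTightCut_of_splitOff (hfeas : ForestBCRFeasible P x z) {r u v w : V}
    (hmin : ∀ ε > 0, ¬ ForestBCRFeasible P (splitOff x r u v w ε) z) (huv : u ≠ v)
    (huv_pos : 0 < x r u v) (hvw_pos : 0 < x r v w) :
    ∃ p U, IsTightCut P x z r p U ∧ (u ∈ U ∧ v ∉ U ∧ w ∈ U ∨ u ∉ U ∧ v ∈ U ∧ w ∉ U) :=
  exists_isTightCut_of_forall_not_feasible hfeas _ r _
    (((eventually_mem_nhdsWithin (a := (0 : ℝ)) (s := Set.Ioi 0)).and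
      (((eventually_le_nhds huv_pos).and (eventually_le_nhds hvw_pos)).filter_mono
        nhdsWithin_le_nhds)).mono
      fun _ ⟨hε, h1, h2⟩ => splitOff_nonneg hfeas.1 huv (le_of_lt hε) h1 h2)
    (cutVal_splitOff x r u v w) hmin

lemma exists_isTightCut_separating_path (hfeas : ForestBCRFeasible P x z)
    (hred : FullyReduced P x z) {r a v b : V} (hav : a ≠ v) (hvb : v ≠ b)
    (hin : 0 < x r a v) (hout : 0 < x r v b) :
    ∃ p U, IsTightCut P x z r p U ∧ (a ∈ U ∧ v ∉ U ∧ b ∈ U ∨ a ∉ U ∧ v ∈ U ∧ b ∉ U) := by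
  by_cases hab : a = b
  · subst hab
    obtain ⟨p, U, hU, haU, hvU⟩ := exists_isTightCut_of_reduceOne hfeas (hred.2 r a v hav) hin
    exact ⟨p, U, hU, Or.inl ⟨haU, hvU, haU⟩⟩
  · exact exists_isTightCut_of_splitOff hfeas (hred.1.2 r a v b hav hvb hab) hav hin hout

lemma le_outFlow_of_pos_in (hfeas : ForestBCRFeasible P x z) (hred : FullyReduced P x z)
    {v : V} (hv : v ∉ terminals P) {r a : V} (ha : a ≠ v) (hpos : 0 < x r a v) :
    x r a v ≤ outFlow x r v := by
  obtain ⟨p, U, hU, haU, hvU⟩ := exists_isTightCut_of_reduceOne hfeas (hred.2 r a v ha) hpos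
  have hrv : r ≠ v := fun h => hv (h ▸ hU.root_mem_terminals hfeas hred.1 haU hvU hpos)
  calc x r a v ≤ ∑ u ∈ U, x r u v :=
        single_le_sum (fun u hu => hfeas.1 r u v (ne_of_mem_of_not_mem hu hvU)) haU
    _ ≤ ∑ w ∈ (insert v U)ᶜ, x r v w := hU.sum_in_le_sum_out hfeas hrv hvU
    _ ≤ outFlow x r v := sum_le_outFlow hfeas.1 r (by simp)

lemma le_inFlow_of_pos_out (hfeas : ForestBCRFeasible P x z) (hred : FullyReduced P x z)
    {v : V} (hv : v ∉ terminals P) {r b : V} (hb : b ≠ v) (hpos : 0 < x r v b) :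
    x r v b ≤ inFlow x r v := by
  obtain ⟨p, U, hU, hvU, hbU⟩ :=
    exists_isTightCut_of_reduceOne hfeas (hred.2 r v b hb.symm) hpos
  calc x r v b ≤ ∑ w ∈ Uᶜ, x r v w :=
        single_le_sum (fun w hw => hfeas.1 r v w (ne_of_mem_of_not_mem hvU (mem_compl.1 hw)))
          (mem_compl.2 hbU)
    _ ≤ ∑ u ∈ U.erase v, x r u v :=
        hU.sum_out_le_sum_in hfeas (notMem_of_notMem_terminals hv hU.1) hvU
    _ ≤ inFlow x r v := sum_le_inFlow hfeas.1 r (notMem_erase v U)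

lemma one_half_le_outFlow_and_inFlow (hfeas : ForestBCRFeasible P x z)
    (hhalf : HalfIntegralSol P x z) (hred : FullyReduced P x z) {v : V} (hv : v ∉ terminals P)
    {r : V} (hr : 0 < outFlow x r v + inFlow x r v) :
    1 / 2 ≤ outFlow x r v ∧ 1 / 2 ≤ inFlow x r v := by
  rcases (show 0 < outFlow x r v ∨ 0 < inFlow x r v by by_contra!; linarith) with hout | hin
  · obtain ⟨b, hb, hpos⟩ := exists_pos_of_sum_pos hout
    have hbv : b ≠ v := ne_of_mem_erase hb
    have hhalf_b := one_half_le_of_pos (hhalf.1 r v b hbv.symm) hpos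
    exact ⟨hhalf_b.trans (single_le_outFlow hfeas.1 r hbv),
      hhalf_b.trans (le_inFlow_of_pos_out hfeas hred hv hbv hpos)⟩
  · obtain ⟨a, ha, hpos⟩ := exists_pos_of_sum_pos hin
    have hav : a ≠ v := ne_of_mem_erase ha
    have hhalf_a := one_half_le_of_pos (hhalf.1 r a v hav) hpos
    exact ⟨hhalf_a.trans (le_outFlow_of_pos_in hfeas hred hv hav hpos),
      hhalf_a.trans (single_le_inFlow hfeas.1 r hav)⟩

lemma not_unique_pos_in_and_out (hfeas : ForestBCRFeasible P x z) (hred : FullyReduced P x z)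
    {v : V} (hv : v ∉ terminals P) {r a b : V} (hav : a ≠ v) (hbv : b ≠ v)
    (hin : 0 < x r a v) (hout : 0 < x r v b)
    (hin_zero : ∀ u ∈ univ.erase v, u ≠ a → x r u v = 0)
    (hout_zero : ∀ w ∈ univ.erase v, w ≠ b → x r v w = 0) : False := by
  obtain ⟨p, U, hU, ⟨haU, hvU, hbU⟩ | ⟨haU, hvU, hbU⟩⟩ :=
    exists_isTightCut_separating_path hfeas hred hav hbv.symm hin hout
  · have hrv : r ≠ v := fun h => hv (h ▸ hU.root_mem_terminals hfeas hred.1 haU hvU hin)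
    have hflow := hU.sum_in_le_sum_out hfeas hrv hvU
    have hsum_out : ∑ w ∈ (insert v U)ᶜ, x r v w = 0 := sum_eq_zero fun w hw => by
      simp only [mem_compl, mem_insert, not_or] at hw
      exact hout_zero w (mem_erase.2 ⟨hw.1, mem_univ w⟩) (ne_of_mem_of_not_mem hbU hw.2).symm
    linarith [single_le_sum (fun u hu => hfeas.1 r u v (ne_of_mem_of_not_mem hu hvU)) haU]
  · have hflow := hU.sum_out_le_sum_in hfeas (notMem_of_notMem_terminals hv hU.1) hvU
    have hsum_in : ∑ u ∈ U.erase v, x r u v = 0 := sum_eq_zero fun u hu =>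
      hin_zero u (erase_subset_erase v (subset_univ U) hu)
        (ne_of_mem_of_not_mem (mem_of_mem_erase hu) haU)
    linarith [single_le_sum
      (fun w hw => hfeas.1 r v w (ne_of_mem_of_not_mem hvU (mem_compl.1 hw))) (mem_compl.2 hbU)]

end

theorem steiner_support_vertex_high_degree_general [Fintype V] [DecidableEq V]
    (P : Finset (Finset V))
    (x : V → V → V → ℝ) (z : V → Finset V → ℝ)
    (hfeas : ForestBCRFeasible P x z)
    (hhalf : HalfIntegralSol P x z)
    (hred : FullyReduced P x z)
    (v : V) (hv : v ∉ terminals P)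
    (hsupp : 0 < ∑ r : V, ((∑ w ∈ Finset.univ.erase v, x r v w) +
      ∑ w ∈ Finset.univ.erase v, x r w v)) :
    (3 / 2 : ℝ) ≤ ∑ r : V, ((∑ w ∈ Finset.univ.erase v, x r v w) +
      ∑ w ∈ Finset.univ.erase v, x r w v) := by
  change 0 < ∑ r, (outFlow x r v + inFlow x r v) at hsupp
  change 3 / 2 ≤ ∑ r, (outFlow x r v + inFlow x r v)
  by_contra! hlt
  have hroot r := one_half_le_outFlow_and_inFlow hfeas hhalf hred hv (r := r)
  obtain ⟨r, -, hr⟩ := exists_pos_of_sum_pos hsupp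
  have htotal : ∑ r', (outFlow x r' v + inFlow x r' v) = outFlow x r v + inFlow x r v :=
    sum_eq_single r (fun r' _ hr'r => eq_zero_of_sum_lt_two_mul (c := 1)
      (fun r' _ => add_nonneg (outFlow_nonneg hfeas.1 r' v) (inFlow_nonneg hfeas.1 r' v))
      (fun r' _ hr' => by linarith [hroot r' hr']) (by linarith) (mem_univ r) (mem_univ r')
      hr'r.symm hr) (by simp)
  obtain ⟨hout, hin⟩ := hroot r hr
  obtain ⟨b, hb, hxb, hout_zero⟩ := exists_pos_forall_ne_eq_zero_of_sum_lt_one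
    (fun w hw => hfeas.1 r v w (ne_of_mem_erase hw).symm)
    (fun w hw => hhalf.1 r v w (ne_of_mem_erase hw).symm) (by linarith : 0 < outFlow x r v)
    (by linarith : outFlow x r v < 1)
  obtain ⟨a, ha, hxa, hin_zero⟩ := exists_pos_forall_ne_eq_zero_of_sum_lt_one
    (fun u hu => hfeas.1 r u v (ne_of_mem_erase hu))
    (fun u hu => hhalf.1 r u v (ne_of_mem_erase hu)) (by linarith : 0 < inFlow x r v)
    (by linarith : inFlow x r v < 1)
  exact not_unique_pos_in_and_out hfeas hred hv (ne_of_mem_erase ha) (ne_of_mem_erase hb)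
    hxa hxb hin_zero hout_zero

/-- In a feasible, half-integral, fully reduced well structured
Forest-BCR solution, every Steiner (non-terminal) support vertex `v` has total
incident `x`-value at least `3/2`. -/
theorem steiner_support_vertex_high_degree [Fintype V] [DecidableEq V]
    (P : Finset (Finset V)) (hP : ∀ p ∈ P, p.card = 2)
    (x : V → V → V → ℝ) (z : V → Finset V → ℝ)
    (hfeas : ForestBCRFeasible P x z)
    (hhalf : HalfIntegralSol P x z)
    (hred : FullyReduced P x z)
    (v : V) (hv : v ∉ terminals P)
    (hsupp : 0 < ∑ r : V, ((∑ w ∈ Finset.univ.erase v, x r v w) +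
      ∑ w ∈ Finset.univ.erase v, x r w v)) :
    (3 / 2 : ℝ) ≤ ∑ r : V, ((∑ w ∈ Finset.univ.erase v, x r v w) +
      ∑ w ∈ Finset.univ.erase v, x r w v) :=
  steiner_support_vertex_high_degree_general P x z hfeas hhalf hred v hv hsupp
end
end
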